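/- Let R be an associative algebra with automorphism σ, and let ω ∈ Ω²R be a 2-form. Then the map Φ : Der(R, R⊗R) → Ω¹_σR defined by Φ(Θ) := Ψ(ι_Θ ω) (twisted contraction followed by the twisting map Ψ) satisfies Φ(u * Θ * v) = u·Φ(Θ)·σ(v) for all u, v ∈ R, where u * Θ * v is the inner bimodule action on double derivations given by (u*Θ*v)(a) = Θ'(a)v ⊗ uΘ''(a), and the actions on Ω¹_σR are u·ξ·w = σ(u)ξw. -/
import Mathlib


open TensorProduct

/-- `Σ p ⊗ q ↦ Σ q ⊗ σ(p)`, the flip-and-twist used in the twisted contraction. -/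
noncomputable def flipTw (k : Type*) [Field k] (R : Type*) [Ring R] [Algebra k R]
    (σ : R ≃ₐ[k] R) : R ⊗[k] R →ₗ[k] R ⊗[k] R :=
  (TensorProduct.map LinearMap.id σ.toLinearMap).comp
    (TensorProduct.comm k R R).toLinearMap

/-- For `ξ = Σ p ⊗ q ∈ R ⊗ R` and `b ∈ R`, the 1-form `Σ q · (db) · σ(p)`:
`Σ (q*b) ⊗ σ(p) − q ⊗ (b*σ(p))`. -/
noncomputable def ctrTerm (k : Type*) [Field k] (R : Type*) [Ring R] [Algebra k R]
    (σ : R ≃ₐ[k] R) (b : R) : R ⊗[k] R →ₗ[k] R ⊗[k] R :=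
  ((TensorProduct.map (LinearMap.mulRight k b) LinearMap.id -
      TensorProduct.map LinearMap.id (LinearMap.mulLeft k b))).comp (flipTw k R σ)

/-- `Φ(Θ) = Ψ(ι_Θ ω)` for the 2-form `ω = Σᵢ d(aᵢ) d(bᵢ)`: the twisted contraction
`ι_Θ(da db) = Θ(a)'' db σ(Θ(a)') + Θ(b)'' σ(da) σ(Θ(b)')` followed by the twisting map
`Ψ : x ⊗ y ↦ σ(x) ⊗ y`. -/
noncomputable def PhiMap (k : Type*) [Field k] (R : Type*) [Ring R] [Algebra k R]
    (σ : R ≃ₐ[k] R) (m : ℕ) (a b : Fin m → R) (Θ : R →ₗ[k] R ⊗[k] R) : R ⊗[k] R :=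
  (TensorProduct.map σ.toLinearMap LinearMap.id)
    (∑ i : Fin m, (ctrTerm k R σ (b i) (Θ (a i)) + ctrTerm k R σ (σ (a i)) (Θ (b i))))

/-- The inner bimodule action on double derivations:
`(u * Θ * v)(r) = Θ'(r)v ⊗ uΘ''(r)`. -/
noncomputable def innerAct (k : Type*) [Field k] (R : Type*) [Ring R] [Algebra k R]
    (u v : R) (Θ : R →ₗ[k] R ⊗[k] R) : R →ₗ[k] R ⊗[k] R :=
  (TensorProduct.map (LinearMap.mulRight k v) (LinearMap.mulLeft k u)).comp Θ

lemma key_lemma (k : Type*) [Field k] (R : Type*) [Ring R] [Algebra k R]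
    (σ : R ≃ₐ[k] R) (c u v : R) (ξ : R ⊗[k] R) :
    (TensorProduct.map σ.toLinearMap LinearMap.id)
      (ctrTerm k R σ c ((TensorProduct.map (LinearMap.mulRight k v) (LinearMap.mulLeft k u)) ξ)) =
    (TensorProduct.map (LinearMap.mulLeft k (σ u)) (LinearMap.mulRight k (σ v)))
      ((TensorProduct.map σ.toLinearMap LinearMap.id) (ctrTerm k R σ c ξ)) := by
  induction ξ using TensorProduct.induction_on with
  | zero => simp
  | tmul p q =>
      simp [ctrTerm, flipTw, tmul_sub, sub_tmul, map_mul, mul_assoc]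
  | add x y hx hy => simp [map_add, hx, hy]

/-- For a 2-form `ω = Σᵢ d(aᵢ) d(bᵢ)` and a double derivation `Θ`,
the map `Φ(Θ) = Ψ(ι_Θ ω)` satisfies `Φ(u * Θ * v) = u · Φ(Θ) · σ(v)`, where `u*Θ*v` is
the inner action on double derivations and the actions on `Ω¹_σR` are
`u · ξ · w = σ(u) ξ w` (i.e. left multiplication by `σ(u)` in the first factor, right
multiplication by `σ(v)` in the second factor). -/
theorem stmt19 (k : Type*) [Field k] (R : Type*) [Ring R] [Algebra k R]
    (σ : R ≃ₐ[k] R) (m : ℕ) (a b : Fin m → R) (Θ : R →ₗ[k] R ⊗[k] R)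
    (hΘ : ∀ x y : R, Θ (x * y) = Θ x * ((1 : R) ⊗ₜ[k] y) + (x ⊗ₜ[k] (1 : R)) * Θ y) :
    ∀ u v : R,
      PhiMap k R σ m a b (innerAct k R u v Θ) =
        (TensorProduct.map (LinearMap.mulLeft k (σ u)) (LinearMap.mulRight k (σ v)))
          (PhiMap k R σ m a b Θ) := by
  intro u v
  simp only [PhiMap, innerAct, LinearMap.comp_apply, map_sum, map_add]
  refine Finset.sum_congr rfl fun i _ => ?_
  rw [key_lemma, key_lemma]
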